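/- arXiv:1603.07708 — 2 statements merged into one kernel-verified Lean document; each statement's English description precedes it below -/
import Mathlib

section
/- Let p be a prime and l a finite field of characteristic p. For all a, b ∈ l, the power series E_p([a]x) · E_p([b]x) · E_p([a+b]x)^{−1} lies in (W(l)[[x]]^×)^p; equivalently, there exists a power series u ∈ W(l)[[x]] with unit constant term such that E_p([a]x) · E_p([b]x) = E_p([a+b]x) · u(x)^p in W(l)[[x]]. -/
open scoped Classical

/-- The formal power series `∑_{n≥0} x^{p^n}/p^n ∈ ℚ[[x]]`. -/
noncomputable def artinHasseLog (p : ℕ) : PowerSeries ℚ :=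
  PowerSeries.mk fun N => if ∃ m : ℕ, N = p ^ m then (N : ℚ)⁻¹ else 0

/-- The `n`-th coefficient of the Artin--Hasse exponential
`E_p(x) = exp(∑_{n≥0} x^{p^n}/p^n)`, as a rational number.  Its denominator is
prime to `p`, so it makes sense in any ring in which integers prime to `p`
are invertible. -/
noncomputable def artinHasseCoeff (p n : ℕ) : ℚ :=
  ∑ k ∈ Finset.range (n + 1),
    (Nat.factorial k : ℚ)⁻¹ * PowerSeries.coeff (R := ℚ) n (artinHasseLog p ^ k)

/-- The Artin--Hasse exponential regarded as a power series over a (commutative)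
`ℤ_(p)`-algebra `R`: the `n`-th coefficient is the image of the `p`-integral rational
`artinHasseCoeff p n`, i.e. its numerator times the inverse of its denominator
(the denominator being a unit in rings like `ℤ_p` or `W(l)`). -/
noncomputable def artinHasseW (p : ℕ) (R : Type*) [CommRing R] : PowerSeries R :=
  PowerSeries.mk fun n =>
    ((artinHasseCoeff p n).num : R) * Ring.inverse (((artinHasseCoeff p n).den : ℕ) : R)

/-!
Over `K = Frac W(l)` one has `E_p(cX) = exp(ℓ(c))` for the Frobenius-twisted logarithm
`ℓ(w) = ∑ₘ φᵐ(w) X^{pᵐ} / pᵐ`, because `φ[a] = [a]ᵖ` for a Teichmüller lift. Now `ℓ` is additive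
and `[a] + [b] = [a + b] + p e` (both sides agree modulo `p`), so
`E_p([a]X) E_p([b]X) = E_p([a + b]X) ⬝ exp(ℓ(e))ᵖ`, and it remains to show that `exp(ℓ(e))` has
coefficients in `W(l)`. This is Dwork's lemma: from `p ℓ(w) = p w X + ℓ(φ w)(Xᵖ)`, the series
`f = exp(ℓ(w))` satisfies `fᵖ = exp(p w X) ⬝ f^φ(Xᵖ)` with `exp(p w X) ≡ 1 mod p` integral, and
comparing coefficients, `F^φ(Xᵖ) ≡ Fᵖ mod p` for the integral truncations `F` of `f` forces each
new coefficient of `f` into `W(l)`. For `w = 1` this also shows that the coefficients of `E_p` are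
`p`-integral, so that `artinHasseW` is `E_p` inside `K⟦X⟧`.
-/

namespace PowerSeries

theorem constantCoeff_map {R S : Type*} [Semiring R] [Semiring S] (f : R →+* S) (F : R⟦X⟧) :
    constantCoeff (map f F) = f (constantCoeff F) :=
  rfl

section Derivative

variable {A : Type*} [CommRing A] [IsAddTorsionFree A]

theorem eq_of_derivative_eq_mul_derivative {y z H : A⟦X⟧}
    (hy : d⁄dX A y = y * d⁄dX A H) (hz : d⁄dX A z = z * d⁄dX A H)
    (hy0 : constantCoeff y = 1) (hz0 : constantCoeff z = 1) : y = z := by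
  obtain ⟨u, rfl⟩ : IsUnit z := isUnit_iff_constantCoeff.mpr (hz0 ▸ isUnit_one)
  have hu : constantCoeff (↑u⁻¹ : A⟦X⟧) = 1 := by
    have h := congrArg constantCoeff u.inv_mul
    rwa [map_mul, hz0, mul_one, map_one] at h
  have hquot : y * ↑u⁻¹ = 1 := by
    refine derivative.ext ?_ (by rw [map_mul, map_one, hy0, hu, one_mul])
    rw [Derivation.leibniz, derivative_inv, hy, hz, Derivation.map_one_eq_zero, smul_eq_mul,
      smul_eq_mul]
    linear_combination (-(y * ↑u⁻¹ * d⁄dX A H)) * u.inv_mul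
  simpa using congrArg (· * (u : A⟦X⟧)) hquot

end Derivative

section Exp

variable {A : Type*} [CommRing A] [Algebra ℚ A]

theorem constantCoeff_exp_subst {F : A⟦X⟧} (hF : constantCoeff F = 0) :
    constantCoeff ((exp A).subst F) = 1 := by
  rw [← coeff_zero_eq_constantCoeff_apply, coeff_subst' (HasSubst.of_constantCoeff_zero' hF),
    finsum_eq_single _ 0 fun d hd => by simp [coeff_zero_eq_constantCoeff_apply, hF, hd]]
  simp

theorem derivative_exp_subst {F : A⟦X⟧} (hF : constantCoeff F = 0) :
    d⁄dX A ((exp A).subst F) = (exp A).subst F * d⁄dX A F := by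
  rw [derivative_subst (HasSubst.of_constantCoeff_zero' hF), derivative_exp]

theorem exp_subst_add [IsAddTorsionFree A] {F G : A⟦X⟧} (hF : constantCoeff F = 0)
    (hG : constantCoeff G = 0) :
    (exp A).subst (F + G) = (exp A).subst F * (exp A).subst G := by
  have hFG : constantCoeff (F + G) = 0 := by rw [map_add, hF, hG, add_zero]
  refine eq_of_derivative_eq_mul_derivative (derivative_exp_subst hFG) ?_
    (constantCoeff_exp_subst hFG)
    (by rw [map_mul, constantCoeff_exp_subst hF, constantCoeff_exp_subst hG, one_mul])
  rw [Derivation.leibniz, derivative_exp_subst hF, derivative_exp_subst hG, map_add, smul_eq_mul,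
    smul_eq_mul]
  ring

theorem exp_subst_nsmul [IsAddTorsionFree A] {F : A⟦X⟧} (hF : constantCoeff F = 0) (n : ℕ) :
    (exp A).subst (n • F) = (exp A).subst F ^ n := by
  induction n with
  | zero =>
    rw [zero_smul, pow_zero, subst_zero_eq_C_constantCoeff, constantCoeff_exp, map_one]
    rfl
  | succ n ih =>
    rw [succ_nsmul, exp_subst_add (by rw [map_nsmul, hF, smul_zero]) hF, ih, pow_succ]

theorem map_exp_subst {A' : Type*} [CommRing A'] [Algebra ℚ A'] (f : A →+* A') {F : A⟦X⟧}
    (hF : constantCoeff F = 0) :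
    map f ((exp A).subst F) = (exp A').subst (map f F) := by
  rw [← map_exp f]
  exact map_subst (HasSubst.of_constantCoeff_zero' hF) _

theorem expand_exp_subst {F : A⟦X⟧} (hF : constantCoeff F = 0) {q : ℕ} (hq : q ≠ 0) :
    expand q hq ((exp A).subst F) = (exp A).subst (expand q hq F) :=
  expand_subst q hq (HasSubst.of_constantCoeff_zero' hF) _

theorem rescale_exp_subst (c : A) {F : A⟦X⟧} (hF : constantCoeff F = 0) :
    rescale c ((exp A).subst F) = (exp A).subst (rescale c F) := by
  rw [rescale_eq_subst, subst_comp_subst_apply (HasSubst.of_constantCoeff_zero' hF)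
    (HasSubst.smul_X' c), ← rescale_eq_subst]

theorem coeff_exp_subst_smul_X (c : A) (n : ℕ) :
    coeff n ((exp A).subst (c • X)) = c ^ n * algebraMap ℚ A (1 / n.factorial) := by
  rw [← rescale_eq_subst, coeff_rescale, coeff_exp]

theorem coeff_exp_subst {F : A⟦X⟧} (hF : constantCoeff F = 0) (n : ℕ) :
    coeff n ((exp A).subst F) =
      ∑ k ∈ Finset.range (n + 1), algebraMap ℚ A (1 / k.factorial) * coeff n (F ^ k) := by
  rw [coeff_subst' (HasSubst.of_constantCoeff_zero' hF),
    finsum_eq_sum_of_support_subset (s := Finset.range (n + 1))]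
  · simp only [coeff_exp, smul_eq_mul]
  · intro k hk
    by_contra hkn
    have hnk : n < k := by simpa using hkn
    exact hk (by
      dsimp only
      rw [X_pow_dvd_iff.mp (pow_dvd_pow_of_dvd (X_dvd_iff.mpr hF) k) n hnk, smul_zero])

end Exp

section Dwork

theorem coeff_eq_of_X_pow_succ_dvd_sub {A : Type*} [CommRing A] {f g : A⟦X⟧} {n : ℕ}
    (h : X ^ (n + 1) ∣ f - g) : coeff n f = coeff n g :=
  sub_eq_zero.mp (by rw [← map_sub]; exact X_pow_dvd_iff.mp h n n.lt_succ_self)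

theorem coeff_pow_of_X_pow_dvd_sub {A : Type*} [CommRing A] {f g : A⟦X⟧} {n : ℕ} (hn : 0 < n)
    (hg : constantCoeff g = 1) (h : X ^ n ∣ f - g) (m : ℕ) :
    coeff n (f ^ m) = coeff n (g ^ m) + m * coeff n (f - g) := by
  obtain ⟨k, hk⟩ := Polynomial.binomExpansion (Polynomial.X ^ m) g (f - g)
  simp only [add_sub_cancel, Polynomial.eval_pow, Polynomial.eval_X, Polynomial.derivative_X_pow,
    Polynomial.eval_mul, Polynomial.eval_C] at hk
  have hsq : X ^ (n + 1) ∣ k * (f - g) ^ 2 - 0 := by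
    rw [sub_zero]
    exact dvd_mul_of_dvd_right ((pow_dvd_pow X (by omega : n + 1 ≤ n * 2)).trans
      (pow_mul (X : A⟦X⟧) n 2 ▸ pow_dvd_pow_of_dvd h 2)) k
  have hlin : X ^ (n + 1) ∣ g ^ (m - 1) * (f - g) - (f - g) := by
    rw [← sub_one_mul, pow_succ']
    refine mul_dvd_mul (X_dvd_iff.mpr ?_) h
    rw [map_sub, map_pow, hg, one_pow, map_one, sub_self]
  rw [hk, map_add, map_add, coeff_eq_of_X_pow_succ_dvd_sub hsq,
    map_zero, add_zero, mul_assoc, ← map_natCast (C (R := A)), coeff_C_mul,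
    coeff_eq_of_X_pow_succ_dvd_sub hlin]

variable {R K k : Type*} [CommRing R] [Field K] [Algebra R K] [CommRing k]
  {p : ℕ} {σ : R →+* R} {σK : K →+* K} {π : R →+* k}

theorem map_expand_map_eq_pow [hp : Fact p.Prime] [CharP k p]
    (hπσ : π.comp σ = (frobenius k p).comp π) (G : R⟦X⟧) :
    map π (expand p hp.out.ne_zero (map σ G)) = map π G ^ p := by
  rw [map_expand, ← RingHom.comp_apply, ← map_comp, hπσ, map_comp, RingHom.comp_apply,
    ← map_expand]
  exact MvPowerSeries.map_frobenius_expand p hp.out.ne_zero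

theorem exists_eq_p_mul_of_map_eq_zero (hker : RingHom.ker π ≤ Ideal.span {(p : R)})
    {H : R⟦X⟧} (hH : map π H = 0) : ∃ D : R⟦X⟧, H = (p : R⟦X⟧) * D := by
  have hcoeff : ∀ n, (p : R) ∣ coeff n H := fun n => Ideal.mem_span_singleton.mp
    (hker (by rw [RingHom.mem_ker, ← coeff_map, hH, map_zero]))
  choose d hd using hcoeff
  exact ⟨mk d, ext fun n => by rw [hd, ← map_natCast (C (R := R)), coeff_C_mul, coeff_mk]⟩

theorem X_pow_succ_dvd_expand_map_sub [hp : Fact p.Prime]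
    (hσK : σK.comp (algebraMap R K) = (algebraMap R K).comp σ)
    {f : K⟦X⟧} {F : R⟦X⟧} {n : ℕ} (hn : 0 < n) (h : X ^ n ∣ f - map (algebraMap R K) F) :
    X ^ (n + 1) ∣ expand p hp.out.ne_zero (map σK f) -
      map (algebraMap R K) (expand p hp.out.ne_zero (map σ F)) := by
  rw [map_expand, ← RingHom.comp_apply (map _), ← map_comp, ← hσK, map_comp, RingHom.comp_apply,
    ← map_sub, ← map_sub]
  have hexp := map_dvd (expand p hp.out.ne_zero) (map_dvd (map σK) h)
  rw [map_pow, map_pow, map_X, expand_X, ← pow_mul] at hexp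
  exact (pow_dvd_pow X (Nat.succ_le_of_lt (lt_mul_left hn hp.out.one_lt))).trans hexp

theorem exists_X_pow_succ_dvd_sub_map [CharZero K] [hp : Fact p.Prime] [CharP k p]
    (hσK : σK.comp (algebraMap R K) = (algebraMap R K).comp σ)
    (hπσ : π.comp σ = (frobenius k p).comp π) (hker : RingHom.ker π ≤ Ideal.span {(p : R)})
    {f : K⟦X⟧} (hf0 : constantCoeff f = 1) {G : R⟦X⟧} (hG : map π G = 1)
    (heq : f ^ p = map (algebraMap R K) G * expand p hp.out.ne_zero (map σK f))
    {n : ℕ} (hn : 0 < n) {F : R⟦X⟧} (hF : X ^ n ∣ f - map (algebraMap R K) F) :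
    ∃ F' : R⟦X⟧, X ^ (n + 1) ∣ f - map (algebraMap R K) F' := by
  set ι := algebraMap R K
  have hF0 : constantCoeff (map ι F) = 1 := by
    have h := X_dvd_iff.mp ((dvd_pow_self X hn.ne').trans hF)
    rwa [map_sub, hf0, sub_eq_zero, eq_comm] at h
  obtain ⟨D, hD⟩ := exists_eq_p_mul_of_map_eq_zero hker
    (H := G * expand p hp.out.ne_zero (map σ F) - F ^ p)
    (by rw [map_sub, map_mul, hG, one_mul, map_pow, map_expand_map_eq_pow hπσ, sub_self])
  -- modulo `X ^ (n + 1)`, `heq` reads `F ^ p + p (f - F) = G ⬝ F^σ(X ^ p) = F ^ p + p D`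
  have hcoeff : coeff n (f - map ι F) = ι (coeff n D) := by
    have hdvd : X ^ (n + 1) ∣ map ι G * expand p hp.out.ne_zero (map σK f) -
        map ι G * map ι (expand p hp.out.ne_zero (map σ F)) := by
      rw [← mul_sub]
      exact dvd_mul_of_dvd_right (X_pow_succ_dvd_expand_map_sub hσK hn hF) _
    have hGF : map ι G * map ι (expand p hp.out.ne_zero (map σ F)) =
        map ι F ^ p + p * map ι D := by
      rw [← map_mul, sub_eq_iff_eq_add.mp hD, map_add, map_pow, map_mul, map_natCast, add_comm]
    have hrhs := coeff_eq_of_X_pow_succ_dvd_sub hdvd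
    rw [← heq, hGF, map_add, coeff_pow_of_X_pow_dvd_sub hn hF0 hF, ← map_natCast (C (R := K)),
      coeff_C_mul, coeff_map] at hrhs
    exact mul_left_cancel₀ (Nat.cast_ne_zero.mpr hp.out.ne_zero) (add_left_cancel hrhs)
  refine ⟨F + monomial n (coeff n D), X_pow_dvd_iff.mpr fun m hm => ?_⟩
  rw [map_add, sub_add_eq_sub_sub, map_sub, coeff_map, coeff_monomial]
  rcases (Nat.lt_succ_iff_lt_or_eq.mp hm) with hm | rfl
  · rw [if_neg hm.ne, map_zero, X_pow_dvd_iff.mp hF m hm, sub_zero]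
  · rw [if_pos rfl, hcoeff, sub_self]

theorem exists_map_eq_of_pow_eq_mul_expand [CharZero K] [hp : Fact p.Prime] [CharP k p]
    (hσK : σK.comp (algebraMap R K) = (algebraMap R K).comp σ)
    (hπσ : π.comp σ = (frobenius k p).comp π) (hker : RingHom.ker π ≤ Ideal.span {(p : R)})
    {f : K⟦X⟧} (hf0 : constantCoeff f = 1) {G : R⟦X⟧} (hG : map π G = 1)
    (heq : f ^ p = map (algebraMap R K) G * expand p hp.out.ne_zero (map σK f)) :
    ∃ u : R⟦X⟧, map (algebraMap R K) u = f := by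
  have happrox : ∀ n, ∃ F : R⟦X⟧, X ^ n ∣ f - map (algebraMap R K) F := by
    intro n
    induction n with
    | zero => exact ⟨0, by rw [pow_zero]; exact one_dvd _⟩
    | succ n ih =>
      obtain ⟨F, hF⟩ := ih
      rcases n.eq_zero_or_pos with rfl | hn
      · refine ⟨1, ?_⟩
        rw [zero_add, pow_one, X_dvd_iff, map_sub, hf0, map_one, map_one, sub_self]
      · exact exists_X_pow_succ_dvd_sub_map hσK hπσ hker hf0 hG heq hn hF
  choose F hF using happrox
  refine ⟨mk fun n => coeff n (F (n + 1)), ext fun n => ?_⟩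
  rw [coeff_map, coeff_mk, ← coeff_map]
  exact (coeff_eq_of_X_pow_succ_dvd_sub (hF (n + 1))).symm

end Dwork

end PowerSeries

theorem exists_mul_factorial_eq_pow {R : Type*} [CommRing R] {p : ℕ} [hp : Fact p.Prime]
    (hunit : ∀ m : ℕ, ¬ p ∣ m → IsUnit (m : R)) (n : ℕ) :
    ∃ r : R, r * n.factorial = p ^ (n - 1) := by
  obtain ⟨v, m, hm, hfac⟩ :=
    Nat.exists_eq_pow_mul_and_not_dvd n.factorial_ne_zero p hp.out.ne_one
  -- `v = v_p(n!)`, and Legendre's formula gives `(p - 1) v < n` for `n ≠ 0`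
  have hv : v ≤ n - 1 := by
    rcases n.eq_zero_or_pos with rfl | hn
    · have h1 := Nat.eq_one_of_mul_eq_one_right hfac.symm
      simp only [Nat.pow_eq_one, hp.out.ne_one, false_or] at h1
      omega
    have hval : padicValNat p n.factorial = v := by
      rw [hfac, padicValNat.mul (pow_ne_zero _ hp.out.ne_zero) (by rintro rfl; simp at hm),
        padicValNat.prime_pow, padicValNat.eq_zero_of_not_dvd hm, add_zero]
    have hlt := sub_one_mul_padicValNat_factorial_lt_of_ne_zero p hn.ne'
    rw [hval] at hlt
    have h2 : v ≤ (p - 1) * v := Nat.le_mul_of_pos_left v (by have := hp.out.two_le; omega)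
    omega
  obtain ⟨u, hu⟩ := hunit m hm
  refine ⟨p ^ (n - 1 - v) * ↑u⁻¹, ?_⟩
  rw [hfac, Nat.cast_mul, Nat.cast_pow, ← hu]
  calc (p : R) ^ (n - 1 - v) * ↑u⁻¹ * ((p : R) ^ v * ↑u)
      = (p : R) ^ (n - 1 - v + v) * (↑u⁻¹ * ↑u) := by ring
    _ = (p : R) ^ (n - 1) := by rw [Nat.sub_add_cancel hv, Units.inv_mul, mul_one]

namespace WittVector

section Field

variable {p : ℕ} [hp : Fact p.Prime] {l : Type*} [Field l] [CharP l p]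

local notation "𝕎" => WittVector p

theorem isUnit_natCast_of_not_dvd {m : ℕ} (hm : ¬ p ∣ m) : IsUnit (m : 𝕎 l) :=
  isUnit_of_coeff_zero_ne_zero _ fun h =>
    hm ((CharP.cast_eq_zero_iff l p m).mp (by rwa [← map_natCast (constantCoeff (p := p)) m]))

theorem natCast_ne_zero {n : ℕ} (hn : n ≠ 0) : (n : 𝕎 l) ≠ 0 := by
  obtain ⟨v, m, hm, rfl⟩ := Nat.exists_eq_pow_mul_and_not_dvd hn p hp.out.ne_one
  rw [Nat.cast_mul, Nat.cast_pow]
  exact mul_ne_zero (pow_ne_zero _ (p_nonzero p l)) (isUnit_natCast_of_not_dvd hm).ne_zero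

instance : CharZero (𝕎 l) :=
  charZero_of_inj_zero fun _ h => by_contra fun hn => natCast_ne_zero hn h

instance : CharZero (FractionRing (𝕎 l)) :=
  ⟨fun a b h => Nat.cast_injective (IsFractionRing.injective (𝕎 l) (FractionRing (𝕎 l))
    (by rwa [map_natCast, map_natCast]))⟩

theorem constantCoeff_comp_frobenius :
    constantCoeff.comp frobenius = (_root_.frobenius l p).comp (constantCoeff : 𝕎 l →+* l) :=
  RingHom.ext fun x => coeff_frobenius_charP p x 0

theorem frobenius_teichmuller (a : l) : frobenius (teichmuller p a) = teichmuller p a ^ p := by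
  rw [frobenius_eq_map_frobenius, map_teichmuller, frobenius_def, map_pow]

theorem frobenius_pow_teichmuller (a : l) (m : ℕ) :
    (frobenius ^ m : 𝕎 l →+* 𝕎 l) (teichmuller p a) = teichmuller p a ^ p ^ m := by
  induction m with
  | zero => rw [pow_zero, pow_zero, pow_one]; rfl
  | succ m ih =>
    rw [pow_succ', RingHom.mul_def, RingHom.comp_apply, ih, map_pow, frobenius_teichmuller,
      ← pow_mul, pow_succ']

end Field

section Perfect

variable {p : ℕ} [hp : Fact p.Prime] {l : Type*} [Field l] [CharP l p] [PerfectRing l p]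

local notation "𝕎" => WittVector p

noncomputable def fractionRingFrobenius : FractionRing (𝕎 l) →+* FractionRing (𝕎 l) :=
  (IsFractionRing.ringEquivOfRingEquiv (frobeniusEquiv p l) :
    FractionRing (𝕎 l) ≃+* FractionRing (𝕎 l)).toRingHom

theorem fractionRingFrobenius_comp_algebraMap :
    fractionRingFrobenius.comp (algebraMap (𝕎 l) (FractionRing (𝕎 l))) =
      (algebraMap (𝕎 l) (FractionRing (𝕎 l))).comp frobenius :=
  RingHom.ext fun x => IsFractionRing.ringEquivOfRingEquiv_algebraMap (frobeniusEquiv p l) x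

theorem exists_teichmuller_add_eq (a b : l) :
    ∃ e : 𝕎 l, teichmuller p a + teichmuller p b = teichmuller p (a + b) + p * e := by
  have hmem : teichmuller p a + teichmuller p b - teichmuller p (a + b) ∈
      Ideal.span {(p : 𝕎 l)} := by
    rw [mem_span_p_iff_coeff_zero_eq_zero, ← constantCoeff_apply, map_sub, map_add]
    simp only [constantCoeff_apply, teichmuller_coeff_zero, sub_self]
  obtain ⟨e, he⟩ := Ideal.mem_span_singleton.mp hmem
  exact ⟨e, by rw [← he]; ring⟩

end Perfect

end WittVector

theorem constantCoeff_artinHasseLog (p : ℕ) : PowerSeries.constantCoeff (artinHasseLog p) = 0 := by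
  rw [← PowerSeries.coeff_zero_eq_constantCoeff_apply, artinHasseLog, PowerSeries.coeff_mk]
  simp

theorem artinHasseCoeff_eq_coeff_exp_subst (p n : ℕ) :
    artinHasseCoeff p n = PowerSeries.coeff n ((PowerSeries.exp ℚ).subst (artinHasseLog p)) := by
  simp [artinHasseCoeff, PowerSeries.coeff_exp_subst (constantCoeff_artinHasseLog p)]

section FrobeniusLog

open PowerSeries

variable {p : ℕ} [hp : Fact p.Prime] {l : Type*} [Field l] [CharP l p]

local notation "𝕎" => WittVector p

local notation "𝕂" => FractionRing (WittVector p l)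

/-- `ℓ(w) = ∑ₘ φᵐ(w) X^{pᵐ} / pᵐ`. -/
noncomputable def frobeniusLog : 𝕎 l →+ 𝕂⟦X⟧ where
  toFun w := mk fun N =>
    if N = p ^ Nat.log p N then
      algebraMap (𝕎 l) 𝕂 ((WittVector.frobenius ^ Nat.log p N : 𝕎 l →+* 𝕎 l) w) / p ^ Nat.log p N
    else 0
  map_zero' := by ext; simp
  map_add' v w := by
    ext N
    simp only [coeff_mk, map_add, add_div]
    split_ifs <;> simp

theorem coeff_frobeniusLog_pow (w : 𝕎 l) (m : ℕ) :
    coeff (p ^ m) (frobeniusLog w) =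
      algebraMap (𝕎 l) 𝕂 ((WittVector.frobenius ^ m : 𝕎 l →+* 𝕎 l) w) / p ^ m := by
  simp [frobeniusLog, Nat.log_pow hp.out.one_lt]

theorem coeff_frobeniusLog_of_ne_pow (w : 𝕎 l) {N : ℕ} (hN : ∀ m, N ≠ p ^ m) :
    coeff N (frobeniusLog w) = 0 := by
  simp [frobeniusLog, hN]

theorem constantCoeff_frobeniusLog (w : 𝕎 l) : constantCoeff (frobeniusLog w) = 0 := by
  rw [← coeff_zero_eq_constantCoeff_apply,
    coeff_frobeniusLog_of_ne_pow w fun m h => (pow_ne_zero m hp.out.ne_zero) h.symm]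

theorem exp_subst_frobeniusLog_add (v w : 𝕎 l) :
    (exp 𝕂).subst (frobeniusLog (v + w)) =
      (exp 𝕂).subst (frobeniusLog v) * (exp 𝕂).subst (frobeniusLog w) := by
  rw [map_add, exp_subst_add (constantCoeff_frobeniusLog v) (constantCoeff_frobeniusLog w)]

theorem exp_subst_frobeniusLog_p_mul (w : 𝕎 l) :
    (exp 𝕂).subst (frobeniusLog ((p : 𝕎 l) * w)) =
      (exp 𝕂).subst (frobeniusLog w) ^ p := by
  rw [← nsmul_eq_mul, map_nsmul, exp_subst_nsmul (constantCoeff_frobeniusLog w)]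

theorem p_smul_frobeniusLog [PerfectRing l p] (w : 𝕎 l) :
    p • frobeniusLog w = algebraMap (𝕎 l) 𝕂 (p * w) • X +
      expand p hp.out.ne_zero (map WittVector.fractionRingFrobenius (frobeniusLog w)) := by
  have hpK : (p : 𝕂) ≠ 0 := Nat.cast_ne_zero.mpr hp.out.ne_zero
  ext N
  rw [map_nsmul, map_add, coeff_expand, coeff_smul, coeff_X, nsmul_eq_mul]
  by_cases hpow : ∃ m, N = p ^ m
  · obtain ⟨m, rfl⟩ := hpow
    rcases m with _ | m
    · have h1 := coeff_frobeniusLog_pow w 0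
      rw [pow_zero] at h1 ⊢
      rw [h1, if_pos rfl, if_neg (Nat.Prime.not_dvd_one hp.out)]
      simp
    · have hdiv : p ^ (m + 1) / p = p ^ m := by rw [pow_succ, Nat.mul_div_cancel _ hp.out.pos]
      rw [if_neg (Nat.one_lt_pow (by omega) hp.out.one_lt).ne', if_pos (dvd_pow_self p (by omega)),
        hdiv, coeff_map, coeff_frobeniusLog_pow, coeff_frobeniusLog_pow, map_div₀, map_pow,
        map_natCast, ← RingHom.comp_apply WittVector.fractionRingFrobenius,
        WittVector.fractionRingFrobenius_comp_algebraMap, RingHom.comp_apply,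
        pow_succ' (WittVector.frobenius : 𝕎 l →+* 𝕎 l) m, RingHom.mul_def,
        RingHom.comp_apply]
      field_simp
      ring
  · simp only [not_exists] at hpow
    rw [coeff_frobeniusLog_of_ne_pow w hpow, if_neg (by simpa using hpow 0), smul_zero, zero_add,
      mul_zero]
    split_ifs with hdvd
    · rw [coeff_map, coeff_frobeniusLog_of_ne_pow, map_zero]
      rintro m hm
      exact hpow (m + 1) (by rw [pow_succ', ← hm, Nat.mul_div_cancel' hdvd])
    · rfl

theorem exp_subst_frobeniusLog_pow [PerfectRing l p] (w : 𝕎 l) :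
    (exp 𝕂).subst (frobeniusLog w) ^ p =
      (exp 𝕂).subst (algebraMap (𝕎 l) 𝕂 (p * w) • X) *
        expand p hp.out.ne_zero (map WittVector.fractionRingFrobenius
          ((exp 𝕂).subst (frobeniusLog w))) := by
  have hℓ := constantCoeff_frobeniusLog w
  have hσℓ : constantCoeff (map WittVector.fractionRingFrobenius (frobeniusLog w)) = 0 := by
    rw [constantCoeff_map, hℓ, map_zero]
  rw [← exp_subst_nsmul hℓ, p_smul_frobeniusLog,
    exp_subst_add (by simp) (by rw [constantCoeff_expand, hσℓ]), map_exp_subst _ hℓ,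
    expand_exp_subst hσℓ]

theorem exists_map_eq_exp_subst_smul_X (w : 𝕎 l) :
    ∃ G : (𝕎 l)⟦X⟧, map WittVector.constantCoeff G = 1 ∧
      map (algebraMap (𝕎 l) 𝕂) G =
        (exp 𝕂).subst (algebraMap (𝕎 l) 𝕂 (p * w) • X) := by
  choose r hr using exists_mul_factorial_eq_pow (R := 𝕎 l)
    (fun _ => WittVector.isUnit_natCast_of_not_dvd)
  refine ⟨mk fun n => if n = 0 then 1 else p * (w ^ n * r n), ext fun n => ?_,
    ext fun n => ?_⟩
  · rcases eq_or_ne n 0 with rfl | hn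
    · simp
    · rw [coeff_map, coeff_mk, if_neg hn, map_mul, map_natCast, CharP.cast_eq_zero, zero_mul,
        coeff_one, if_neg hn]
  · rw [coeff_map, coeff_mk, coeff_exp_subst_smul_X]
    rcases eq_or_ne n 0 with rfl | hn
    · simp
    have hfac : (n.factorial : 𝕂) ≠ 0 := Nat.cast_ne_zero.mpr n.factorial_ne_zero
    have hrn := congrArg (algebraMap (𝕎 l) 𝕂) (hr n)
    rw [map_mul, map_natCast, map_pow, map_natCast] at hrn
    have hpn : (p : 𝕂) ^ n = p * p ^ (n - 1) := by
      rw [← pow_succ', Nat.sub_add_cancel (Nat.one_le_iff_ne_zero.mpr hn)]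
    rw [if_neg hn, map_div₀, map_one, map_natCast, mul_one_div, eq_div_iff hfac]
    simp only [map_mul, map_pow, map_natCast]
    linear_combination (p * algebraMap (𝕎 l) 𝕂 w ^ n) * hrn -
      algebraMap (𝕎 l) 𝕂 w ^ n * hpn

theorem exists_map_eq_exp_subst_frobeniusLog [PerfectRing l p] (w : 𝕎 l) :
    ∃ u : (𝕎 l)⟦X⟧,
      map (algebraMap (𝕎 l) 𝕂) u = (exp 𝕂).subst (frobeniusLog w) := by
  obtain ⟨G, hG, hGexp⟩ := exists_map_eq_exp_subst_smul_X w
  exact exists_map_eq_of_pow_eq_mul_expand WittVector.fractionRingFrobenius_comp_algebraMap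
    WittVector.constantCoeff_comp_frobenius WittVector.ker_constantCoeff.le
    (constantCoeff_exp_subst (constantCoeff_frobeniusLog w)) hG
    (by rw [hGexp]; exact exp_subst_frobeniusLog_pow w)

theorem frobeniusLog_teichmuller (a : l) :
    frobeniusLog (WittVector.teichmuller p a) =
      rescale (algebraMap (𝕎 l) 𝕂 (WittVector.teichmuller p a))
        (map (algebraMap ℚ 𝕂) (artinHasseLog p)) := by
  ext N
  rw [coeff_rescale, coeff_map, artinHasseLog, coeff_mk]
  by_cases hpow : ∃ m, N = p ^ m
  · obtain ⟨m, rfl⟩ := hpow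
    rw [if_pos ⟨m, rfl⟩, coeff_frobeniusLog_pow, WittVector.frobenius_pow_teichmuller, map_pow,
      map_inv₀, map_natCast, Nat.cast_pow, div_eq_mul_inv]
  · simp only [not_exists] at hpow
    rw [if_neg (by simpa using hpow), map_zero, mul_zero, coeff_frobeniusLog_of_ne_pow _ hpow]

theorem algebraMap_num_mul_inverse_den {c : ℚ}
    (hc : ∃ r : 𝕎 l, algebraMap (𝕎 l) 𝕂 r = algebraMap ℚ 𝕂 c) :
    algebraMap (𝕎 l) 𝕂 (c.num * Ring.inverse (c.den : 𝕎 l)) =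
      algebraMap ℚ 𝕂 c := by
  obtain ⟨r, hr⟩ := hc
  have hrc : r * c.den = c.num := IsFractionRing.injective (𝕎 l) 𝕂 (by
    rw [map_mul, hr, map_natCast, map_intCast, ← map_natCast (algebraMap ℚ 𝕂), ← map_mul,
      Rat.mul_den_eq_num, map_intCast])
  -- a factor `p` of the denominator would divide the numerator too, by reduction modulo `p`
  have hden : ¬ p ∣ c.den := fun hdvd => by
    have hnum := congrArg WittVector.constantCoeff hrc
    rw [map_mul, map_natCast, map_intCast, (CharP.cast_eq_zero_iff l p _).mpr hdvd, mul_zero,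
      eq_comm, CharP.intCast_eq_zero_iff l p] at hnum
    exact hp.out.not_dvd_one (c.reduced ▸ Nat.dvd_gcd (Int.natCast_dvd.mp hnum) hdvd)
  have hunit := WittVector.isUnit_natCast_of_not_dvd (l := l) hden
  rw [← hr, ← hrc, mul_assoc, Ring.mul_inverse_cancel _ hunit, mul_one]

theorem map_artinHasseW [PerfectRing l p] :
    map (algebraMap (𝕎 l) 𝕂) (artinHasseW p (𝕎 l)) =
      (exp 𝕂).subst (map (algebraMap ℚ 𝕂) (artinHasseLog p)) := by
  have hlog : frobeniusLog (1 : 𝕎 l) = map (algebraMap ℚ 𝕂) (artinHasseLog p) := by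
    rw [← map_one (WittVector.teichmuller p), frobeniusLog_teichmuller, map_one, map_one,
      rescale_one, RingHom.id_apply]
  have hcoeff (n : ℕ) : coeff n ((exp 𝕂).subst (map (algebraMap ℚ 𝕂) (artinHasseLog p))) =
      algebraMap ℚ 𝕂 (artinHasseCoeff p n) := by
    rw [← map_exp_subst _ (constantCoeff_artinHasseLog p), coeff_map,
      artinHasseCoeff_eq_coeff_exp_subst]
  obtain ⟨u, hu⟩ := exists_map_eq_exp_subst_frobeniusLog (1 : 𝕎 l)
  rw [hlog] at hu
  ext n
  rw [hcoeff, coeff_map, artinHasseW, coeff_mk]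
  exact algebraMap_num_mul_inverse_den ⟨coeff n u, by rw [← coeff_map, hu, hcoeff]⟩

theorem map_rescale_teichmuller_artinHasseW [PerfectRing l p] (a : l) :
    map (algebraMap (𝕎 l) 𝕂)
        (rescale (WittVector.teichmuller p a) (artinHasseW p (𝕎 l))) =
      (exp 𝕂).subst (frobeniusLog (WittVector.teichmuller p a)) := by
  have hlog0 : constantCoeff (map (algebraMap ℚ 𝕂) (artinHasseLog p)) = 0 := by
    rw [constantCoeff_map, constantCoeff_artinHasseLog, map_zero]
  rw [← rescale_map, map_artinHasseW, rescale_exp_subst _ hlog0, frobeniusLog_teichmuller]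

end FrobeniusLog

/-- First multiplicativity lemma for the Artin--Hasse exponential: for a finite
field `l` of characteristic `p` and `a, b ∈ l`, the series
`E_p([a]x) ⬝ E_p([b]x) ⬝ E_p([a+b]x)⁻¹` lies in `(W(l)[[x]]^×)^p`; equivalently
there is a unit `u` of `W(l)[[x]]` with
`E_p([a]x) ⬝ E_p([b]x) = E_p([a+b]x) ⬝ u^p`.  Here `[·]` is the Teichmüller lift
and `E_p(cx)` is obtained from `E_p` by rescaling `x ↦ cx`. -/
theorem artinHasse_teichmuller_mul (p : ℕ) [hp : Fact p.Prime] (l : Type*) [Field l]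
    [Finite l] [CharP l p] (a b : l) :
    ∃ u : (PowerSeries (WittVector p l))ˣ,
      PowerSeries.rescale (WittVector.teichmuller p a) (artinHasseW p (WittVector p l)) *
          PowerSeries.rescale (WittVector.teichmuller p b) (artinHasseW p (WittVector p l)) =
        PowerSeries.rescale (WittVector.teichmuller p (a + b))
            (artinHasseW p (WittVector p l)) *
          (u : PowerSeries (WittVector p l)) ^ p := by
  have hι : Function.Injective (algebraMap (WittVector p l) (FractionRing (WittVector p l))) :=
    IsFractionRing.injective _ _
  obtain ⟨e, he⟩ := WittVector.exists_teichmuller_add_eq a b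
  obtain ⟨u, hu⟩ := exists_map_eq_exp_subst_frobeniusLog e
  have hu0 : PowerSeries.constantCoeff u = 1 := hι (by
    rw [map_one, ← PowerSeries.constantCoeff_map, hu,
      PowerSeries.constantCoeff_exp_subst (constantCoeff_frobeniusLog e)])
  have hunit : IsUnit u := PowerSeries.isUnit_iff_constantCoeff.mpr (hu0 ▸ isUnit_one)
  refine ⟨hunit.unit, PowerSeries.map_injective _ hι ?_⟩
  rw [map_mul, map_mul, map_pow, hunit.unit_spec, hu, map_rescale_teichmuller_artinHasseW,
    map_rescale_teichmuller_artinHasseW, map_rescale_teichmuller_artinHasseW,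
    ← exp_subst_frobeniusLog_add, ← exp_subst_frobeniusLog_p_mul, ← exp_subst_frobeniusLog_add, he]
end

section
/- Let (a_0, …, a_{f−1}) be a tame signature for a prime p and integer f ≥ 1. Then for every subset J ⊆ ℤ/fℤ one has δ(J) ⊆ μ(J) ⊆ δ(J) ∪ J, where δ(J) denotes the image of J under the induced map δ : ℤ/fℤ → ℤ/fℤ. -/
open scoped Classical

/-- `a : ℤ → ℕ` represents a tame signature `(a_0, …, a_{f−1}) ∈ {1,…,p}^f` (not all
entries equal to `p`), with the indices extended to all of `ℤ` by `f`-periodicity. -/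
def IsTameSignature (p f : ℕ) (a : ℤ → ℕ) : Prop :=
  0 < f ∧ (∀ j : ℤ, a (j + f) = a j) ∧ (∀ j : ℤ, 1 ≤ a j ∧ a j ≤ p) ∧ ∃ j : ℤ, a j ≠ p

/-- `([i], [i+t])` with `1 ≤ t ≤ f−1` is a dependent pair if `a_{i+1} = p`,
`a_{i+t+1} ≠ p`, and for some `s ∈ {1,…,t}` one has
`a_{i+2} = ⋯ = a_{i+s} = p−1` and `a_{i+s+1} = ⋯ = a_{i+t} = p`. -/
def IsDependentPair (p f : ℕ) (a : ℤ → ℕ) (x y : ZMod f) : Prop :=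
  ∃ i t : ℤ, 1 ≤ t ∧ t ≤ (f : ℤ) - 1 ∧ x = (i : ZMod f) ∧ y = ((i + t : ℤ) : ZMod f) ∧
    a (i + 1) = p ∧ a (i + t + 1) ≠ p ∧
    ∃ s : ℤ, 1 ≤ s ∧ s ≤ t ∧
      (∀ m : ℤ, i + 2 ≤ m → m ≤ i + s → a m = p - 1) ∧
      (∀ m : ℤ, i + s + 1 ≤ m → m ≤ i + t → a m = p)

/-- A subset `J ⊆ ℤ/fℤ` is admissible if for every dependent pair `([j],[i])` with
`[i] ∈ J` one also has `[j] ∈ J`. -/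
def SigAdmissible (p f : ℕ) (a : ℤ → ℕ) (J : Set (ZMod f)) : Prop :=
  ∀ x y : ZMod f, IsDependentPair p f a x y → y ∈ J → x ∈ J

/-- The shifting function `δ : ℤ → ℤ`: `δ(j) = j` unless
`(a_{i+1}, a_{i+2}, …, a_j) = (p, p−1, …, p−1)` for some (necessarily unique) `i < j`,
in which case `δ(j) = i`. -/
noncomputable def sigDelta (p : ℕ) (a : ℤ → ℕ) (j : ℤ) : ℤ :=
  if h : ∃ i : ℤ, i < j ∧ a (i + 1) = p ∧ ∀ m : ℤ, i + 1 < m → m ≤ j → a m = p - 1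
  then h.choose else j

/-- The map `ℤ/fℤ → ℤ/fℤ` induced by `δ`. -/
noncomputable def sigDeltaBar (p f : ℕ) (a : ℤ → ℕ) (x : ZMod f) : ZMod f :=
  ((sigDelta p a (x.val : ℤ) : ℤ) : ZMod f)

/-- The set `μ(J) = {[i_1], …, [i_r]}` produced by the construction from a chosen
starting integer `i₁` (whose class lies in `δ(J) ∖ J`): `j₁` is the least integer with
`j₁ > i₁`, `[j₁] ∈ J` and `δ(j₁) = i₁`; writing `J = {[j_1],…,[j_r]}` with
`j_1 < ⋯ < j_r < j_1 + f`, one sets inductively `i_κ = δ(j_κ)` if `i_{κ−1} < δ(j_κ)`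
and `i_κ = j_κ` otherwise. -/
noncomputable def sigMuFrom (p f : ℕ) (a : ℤ → ℕ) (J : Set (ZMod f)) (i₁ : ℤ) :
    Set (ZMod f) :=
  let j₁ : ℤ :=
    if h : ∃ j : ℤ, (i₁ < j ∧ (j : ZMod f) ∈ J ∧ sigDelta p a j = i₁) ∧
        ∀ j' : ℤ, (i₁ < j' ∧ (j' : ZMod f) ∈ J ∧ sigDelta p a j' = i₁) → j ≤ j'
    then h.choose else i₁ + 1
  -- the representatives of `J` in the window `[j₁, j₁ + f)`, in increasing order:
  -- `jSeq κ` is the `(κ+1)`-st smallest, i.e. `j_{κ+1}` in the notation above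
  let jSeq : ℕ → ℤ := fun κ =>
    j₁ + (Nat.nth (fun v : ℕ => ∃ x ∈ J, (x - (j₁ : ZMod f)).val = v) κ : ℤ)
  let iSeq : ℕ → ℤ := fun κ =>
    Nat.rec (motive := fun _ => ℤ) i₁
      (fun κ' ih =>
        if ih < sigDelta p a (jSeq (κ' + 1)) then sigDelta p a (jSeq (κ' + 1))
        else jSeq (κ' + 1)) κ
  { y : ZMod f | ∃ κ : ℕ, κ < J.ncard ∧ y = (Int.cast (iSeq κ) : ZMod f) }

/-- The set `μ(J)`: if `δ(J) ⊆ J` then `μ(J) = J`; otherwise it is produced by the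
construction `sigMuFrom` applied to a choice of `[i₁] ∈ δ(J) ∖ J`. -/
noncomputable def sigMu (p f : ℕ) (a : ℤ → ℕ) (J : Set (ZMod f)) : Set (ZMod f) :=
  if sigDeltaBar p f a '' J ⊆ J then J
  else if h : ∃ i : ℤ, (i : ZMod f) ∈ (sigDeltaBar p f a '' J) \ J
    then sigMuFrom p f a J h.choose else J

/-!
Write `i_κ` and `j_κ` for the sequences of the construction (indexed from `0`), so that
`i_0 = δ(j_0)` and `j_0 ≤ j_1 ≤ ⋯`. Every `i_κ` is `δ(j_κ)` or `j_κ`, which gives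
`μ(J) ⊆ δ(J) ∪ J`. Conversely, `δ(j_κ)` occurs among `i_0, …, i_κ`, by induction on `κ`:
if `i_{κ-1} < δ(j_κ)` then `i_κ = δ(j_κ)`; if `δ(j_κ) < j_{κ-1}` then `δ(j_{κ-1}) = δ(j_κ)`,
because `δ` is constant on `(δ(j), j]` (the witness of `δ(j)` is unique as `p ≠ p − 1`);
otherwise `j_{κ-1} ≤ δ(j_κ) ≤ i_{κ-1} ≤ j_{κ-1}`.
-/

section MuSeq

variable (δ : ℤ → ℤ) (j : ℕ → ℤ)

/-- The sequence `i_κ` of the construction of `μ(J)`, indexed from `0`. -/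
def muSeq (i₀ : ℤ) (κ : ℕ) : ℤ :=
  Nat.rec (motive := fun _ => ℤ) i₀
    (fun κ' ih => if ih < δ (j (κ' + 1)) then δ (j (κ' + 1)) else j (κ' + 1)) κ

theorem muSeq_succ (i₀ : ℤ) (κ : ℕ) :
    muSeq δ j i₀ (κ + 1) =
      if muSeq δ j i₀ κ < δ (j (κ + 1)) then δ (j (κ + 1)) else j (κ + 1) := rfl

variable {δ j} {i₀ : ℤ}

theorem muSeq_eq_or (h₀ : δ (j 0) = i₀) (κ : ℕ) :
    muSeq δ j i₀ κ = δ (j κ) ∨ muSeq δ j i₀ κ = j κ := by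
  cases κ with
  | zero => exact Or.inl h₀.symm
  | succ κ =>
    rw [muSeq_succ]
    split_ifs
    exacts [Or.inl rfl, Or.inr rfl]

theorem muSeq_le (hle : ∀ j, δ j ≤ j) (h₀ : δ (j 0) = i₀) (κ : ℕ) : muSeq δ j i₀ κ ≤ j κ := by
  rcases muSeq_eq_or h₀ κ with h | h
  · exact h ▸ hle _
  · exact h.le

theorem exists_muSeq_eq (hle : ∀ j, δ j ≤ j) (hδ : ∀ j j', δ j' < j → j ≤ j' → δ j = δ j')
    {n : ℕ} (hj : MonotoneOn j (Set.Iio n)) (h₀ : δ (j 0) = i₀) {κ : ℕ} (hκ : κ < n) :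
    ∃ l ≤ κ, muSeq δ j i₀ l = δ (j κ) := by
  induction κ with
  | zero => exact ⟨0, le_rfl, h₀.symm⟩
  | succ κ ih =>
    by_cases hlt : muSeq δ j i₀ κ < δ (j (κ + 1))
    · exact ⟨κ + 1, le_rfl, by rw [muSeq_succ, if_pos hlt]⟩
    have hjκ : j κ ≤ j (κ + 1) :=
      hj (Set.mem_Iio.2 (by omega)) (Set.mem_Iio.2 hκ) (Nat.le_succ κ)
    by_cases hδκ : δ (j (κ + 1)) < j κ
    · obtain ⟨l, hl, hl'⟩ := ih (by omega)
      exact ⟨l, by omega, hl'.trans (hδ _ _ hδκ hjκ)⟩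
    · have := muSeq_le hle h₀ κ
      exact ⟨κ, Nat.le_succ κ, by omega⟩

end MuSeq

section WindowRep

variable {f : ℕ} (J : Set (ZMod f)) (c : ℤ)

/-- The `κ`-th smallest integer in `[c, c + f)` whose class lies in `J`, for `κ < |J|`. -/
noncomputable def windowRep (κ : ℕ) : ℤ :=
  c + Nat.nth (fun v : ℕ => ∃ x ∈ J, (x - (c : ZMod f)).val = v) κ

theorem windowRep_zero {J : Set (ZMod f)} {c : ℤ} (hc : (c : ZMod f) ∈ J) :
    windowRep J c 0 = c := by
  rw [windowRep, Nat.nth_zero_of_zero ⟨c, hc, by simp⟩]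
  simp

variable [NeZero f]

theorem intCast_add_val_sub (x : ZMod f) : ((c + (x - c).val : ℤ) : ZMod f) = x := by
  push_cast
  rw [ZMod.natCast_zmod_val]
  ring

theorem windowOffsets_finite : {v : ℕ | ∃ x ∈ J, (x - (c : ZMod f)).val = v}.Finite :=
  J.toFinite.image _

theorem card_windowOffsets :
    (windowOffsets_finite J c).toFinset.card = J.ncard := by
  rw [← Set.ncard_eq_toFinset_card _ (windowOffsets_finite J c)]
  exact Set.ncard_image_of_injective J
    ((ZMod.val_injective f).comp (sub_left_injective (b := (c : ZMod f))))

variable {J c}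

theorem windowRep_monotoneOn : MonotoneOn (windowRep J c) (Set.Iio J.ncard) := by
  intro κ hκ κ' hκ' h
  have hmono := (Nat.nth_strictMonoOn (windowOffsets_finite J c)).monotoneOn
  rw [card_windowOffsets] at hmono
  simpa [windowRep] using hmono hκ hκ' h

theorem intCast_windowRep_mem {κ : ℕ} (hκ : κ < J.ncard) : (windowRep J c κ : ZMod f) ∈ J := by
  obtain ⟨x, hx, hxκ⟩ := Nat.nth_mem_of_lt_card (windowOffsets_finite J c)
    (hκ.trans_eq (card_windowOffsets J c).symm)
  rwa [windowRep, ← hxκ, intCast_add_val_sub]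

theorem exists_intCast_windowRep_eq {x : ZMod f} (hx : x ∈ J) :
    ∃ κ < J.ncard, (windowRep J c κ : ZMod f) = x := by
  obtain ⟨κ, hκ, hκx⟩ :=
    Nat.exists_lt_card_finite_nth_eq (windowOffsets_finite J c) ⟨x, hx, rfl⟩
  refine ⟨κ, hκ.trans_eq (card_windowOffsets J c), ?_⟩
  rw [windowRep, hκx, intCast_add_val_sub]

end WindowRep

section SigDelta

variable {p : ℕ} {a : ℤ → ℕ} {i j : ℤ}

def IsSigDeltaWitness (p : ℕ) (a : ℤ → ℕ) (j i : ℤ) : Prop :=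
  i < j ∧ a (i + 1) = p ∧ ∀ m : ℤ, i + 1 < m → m ≤ j → a m = p - 1

theorem IsSigDeltaWitness.unique (hp : 0 < p) {i' : ℤ} (h : IsSigDeltaWitness p a j i)
    (h' : IsSigDeltaWitness p a j i') : i = i' := by
  obtain ⟨hij, hi, hi_tail⟩ := h
  obtain ⟨hij', hi', hi'_tail⟩ := h'
  by_contra hne
  rcases lt_or_gt_of_ne hne with hlt | hlt
  · have := hi_tail (i' + 1) (by omega) (by omega)
    omega
  · have := hi'_tail (i + 1) (by omega) (by omega)
    omega

theorem sigDelta_eq_self_or_isSigDeltaWitness (j : ℤ) :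
    sigDelta p a j = j ∨ IsSigDeltaWitness p a j (sigDelta p a j) := by
  rw [sigDelta]
  split
  · next h => exact Or.inr h.choose_spec
  · exact Or.inl rfl

theorem sigDelta_eq_self (h : ¬∃ i, IsSigDeltaWitness p a j i) : sigDelta p a j = j :=
  dif_neg h

theorem sigDelta_eq_of_isSigDeltaWitness (hp : 0 < p) (h : IsSigDeltaWitness p a j i) :
    sigDelta p a j = i := by
  have hex : ∃ i, IsSigDeltaWitness p a j i := ⟨i, h⟩
  exact (dif_pos hex).trans (hex.choose_spec.unique hp h)

theorem sigDelta_le (j : ℤ) : sigDelta p a j ≤ j := by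
  rcases sigDelta_eq_self_or_isSigDeltaWitness (p := p) (a := a) j with h | h
  · exact h.le
  · exact h.1.le

theorem sigDelta_eq_of_lt_of_le (hp : 0 < p) {j' : ℤ} (h : sigDelta p a j' < j) (hj : j ≤ j') :
    sigDelta p a j = sigDelta p a j' := by
  rcases sigDelta_eq_self_or_isSigDeltaWitness (p := p) (a := a) j' with h' | ⟨-, hδ, hδ_tail⟩
  · omega
  · exact sigDelta_eq_of_isSigDeltaWitness hp ⟨h, hδ, fun m hm hmj ↦ hδ_tail m hm (hmj.trans hj)⟩

theorem isSigDeltaWitness_add_iff {c : ℤ} (ha : Function.Periodic a c) :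
    IsSigDeltaWitness p a (j + c) (i + c) ↔ IsSigDeltaWitness p a j i := by
  have hshift : ∀ m, a (m + c) = a m := ha
  simp only [IsSigDeltaWitness, add_right_comm i c 1, hshift, add_lt_add_iff_right]
  refine and_congr_right fun _ ↦ and_congr_right fun _ ↦
    ⟨fun h m hm hmj ↦ ?_, fun h m hm hmj ↦ ?_⟩
  · simpa [hshift] using h (m + c) (by omega) (by omega)
  · have := h (m - c) (by omega) (by omega)
    rwa [← hshift, sub_add_cancel] at this

theorem sigDelta_add (hp : 0 < p) {c : ℤ} (ha : Function.Periodic a c) (j : ℤ) :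
    sigDelta p a (j + c) = sigDelta p a j + c := by
  by_cases hw : ∃ i, IsSigDeltaWitness p a j i
  · obtain ⟨i, hi⟩ := hw
    rw [sigDelta_eq_of_isSigDeltaWitness hp hi,
      sigDelta_eq_of_isSigDeltaWitness hp ((isSigDeltaWitness_add_iff ha).2 hi)]
  · have hw' : ¬∃ i, IsSigDeltaWitness p a (j + c) i := fun ⟨i, hi⟩ ↦
      hw ⟨i - c, (isSigDeltaWitness_add_iff ha).1 (by rwa [sub_add_cancel])⟩
    rw [sigDelta_eq_self hw, sigDelta_eq_self hw']

variable {f : ℕ}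

theorem sigDelta_add_mul (hp : 0 < p) (ha : Function.Periodic a f) (j k : ℤ) :
    sigDelta p a (j + k * f) = sigDelta p a j + k * f :=
  sigDelta_add hp (ha.int_mul k) j

theorem sigDeltaBar_intCast [NeZero f] (hp : 0 < p) (ha : Function.Periodic a f) (j : ℤ) :
    sigDeltaBar p f a j = (sigDelta p a j : ZMod f) := by
  have hval : (((j : ZMod f).val : ℕ) : ℤ) = j + -(j / f) * f := by
    rw [ZMod.val_intCast, Int.emod_def]
    ring
  rw [sigDeltaBar, hval, sigDelta_add_mul hp ha]
  simp

theorem exists_intCast_eq_sigDelta_eq (hp : 0 < p) (ha : Function.Periodic a f)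
    (h : (sigDelta p a j : ZMod f) = i) :
    ∃ j' : ℤ, (j' : ZMod f) = j ∧ sigDelta p a j' = i := by
  obtain ⟨k, hk⟩ := (ZMod.intCast_eq_intCast_iff_dvd_sub _ _ _).1 h
  refine ⟨j + k * f, by simp, ?_⟩
  rw [sigDelta_add_mul hp ha]
  linarith

end SigDelta

section SigMu

variable {p f : ℕ} {a : ℤ → ℕ} {J : Set (ZMod f)} {i₁ : ℤ}

/-- The integer `j₁` of the construction of `μ(J)`. -/
noncomputable def sigMuStart (p f : ℕ) (a : ℤ → ℕ) (J : Set (ZMod f)) (i₁ : ℤ) : ℤ :=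
  if h : ∃ j : ℤ, (i₁ < j ∧ (j : ZMod f) ∈ J ∧ sigDelta p a j = i₁) ∧
      ∀ j' : ℤ, (i₁ < j' ∧ (j' : ZMod f) ∈ J ∧ sigDelta p a j' = i₁) → j ≤ j'
  then h.choose else i₁ + 1

theorem sigMuFrom_eq (p f : ℕ) (a : ℤ → ℕ) (J : Set (ZMod f)) (i₁ : ℤ) :
    sigMuFrom p f a J i₁ = {y | ∃ κ < J.ncard,
      y = (muSeq (sigDelta p a) (windowRep J (sigMuStart p f a J i₁)) i₁ κ : ZMod f)} :=
  rfl

theorem sigMuStart_spec (h : ∃ j : ℤ, i₁ < j ∧ (j : ZMod f) ∈ J ∧ sigDelta p a j = i₁) :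
    (sigMuStart p f a J i₁ : ZMod f) ∈ J ∧ sigDelta p a (sigMuStart p f a J i₁) = i₁ := by
  obtain ⟨j, hj, hjmin⟩ := Int.exists_least_of_bdd ⟨i₁, fun _ hj ↦ hj.1.le⟩ h
  have hex : ∃ j : ℤ, (i₁ < j ∧ (j : ZMod f) ∈ J ∧ sigDelta p a j = i₁) ∧
      ∀ j' : ℤ, (i₁ < j' ∧ (j' : ZMod f) ∈ J ∧ sigDelta p a j' = i₁) → j ≤ j' :=
    ⟨j, hj, hjmin⟩
  rw [sigMuStart, dif_pos hex]
  exact hex.choose_spec.1.2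

theorem exists_lt_mem_sigDelta_eq [NeZero f] (hp : 0 < p) (ha : Function.Periodic a f)
    (h₁ : (i₁ : ZMod f) ∈ sigDeltaBar p f a '' J \ J) :
    ∃ j : ℤ, i₁ < j ∧ (j : ZMod f) ∈ J ∧ sigDelta p a j = i₁ := by
  obtain ⟨⟨x, hxJ, hx⟩, hi₁J⟩ := h₁
  obtain ⟨j, rfl⟩ := ZMod.intCast_surjective x
  rw [sigDeltaBar_intCast hp ha] at hx
  obtain ⟨j', hj', hδj'⟩ := exists_intCast_eq_sigDelta_eq hp ha hx
  refine ⟨j', lt_of_le_of_ne (hδj' ▸ sigDelta_le j') ?_, hj' ▸ hxJ, hδj'⟩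
  rintro rfl
  exact hi₁J (hj' ▸ hxJ)

theorem sigDeltaBar_image_subset_sigMuFrom_subset [NeZero f] (hp : 0 < p)
    (ha : Function.Periodic a f) (h₁ : (i₁ : ZMod f) ∈ sigDeltaBar p f a '' J \ J) :
    sigDeltaBar p f a '' J ⊆ sigMuFrom p f a J i₁ ∧
      sigMuFrom p f a J i₁ ⊆ sigDeltaBar p f a '' J ∪ J := by
  obtain ⟨hj₁J, hδj₁⟩ := sigMuStart_spec (exists_lt_mem_sigDelta_eq hp ha h₁)
  have h₀ : sigDelta p a (windowRep J (sigMuStart p f a J i₁) 0) = i₁ := by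
    rw [windowRep_zero hj₁J, hδj₁]
  rw [sigMuFrom_eq]
  constructor
  · rintro _ ⟨x, hxJ, rfl⟩
    obtain ⟨κ, hκ, rfl⟩ := exists_intCast_windowRep_eq (c := sigMuStart p f a J i₁) hxJ
    obtain ⟨l, hlκ, hl⟩ := exists_muSeq_eq sigDelta_le (fun _ _ ↦ sigDelta_eq_of_lt_of_le hp)
      windowRep_monotoneOn h₀ hκ
    exact ⟨l, by omega, by rw [sigDeltaBar_intCast hp ha, hl]⟩
  · rintro _ ⟨κ, hκ, rfl⟩
    rcases muSeq_eq_or h₀ κ with h | h <;> rw [h]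
    · exact Or.inl ⟨_, intCast_windowRep_mem hκ, sigDeltaBar_intCast hp ha _⟩
    · exact Or.inr (intCast_windowRep_mem hκ)

end SigMu

theorem sigDelta_subset_sigMu_subset_general (p f : ℕ) (a : ℤ → ℕ)
    (hsig : IsTameSignature p f a) (J : Set (ZMod f)) :
    sigDeltaBar p f a '' J ⊆ sigMu p f a J ∧
      sigMu p f a J ⊆ (sigDeltaBar p f a '' J) ∪ J := by
  obtain ⟨hf, ha, ha_bounds, -⟩ := hsig
  have hp : 0 < p := by have := ha_bounds 0; omega
  have : NeZero f := ⟨hf.ne'⟩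
  by_cases hsub : sigDeltaBar p f a '' J ⊆ J
  · rw [sigMu, if_pos hsub]
    exact ⟨hsub, Set.subset_union_right⟩
  have hex : ∃ i : ℤ, (i : ZMod f) ∈ sigDeltaBar p f a '' J \ J := by
    obtain ⟨y, hy⟩ := Set.not_subset.1 hsub
    obtain ⟨i, rfl⟩ := ZMod.intCast_surjective y
    exact ⟨i, hy⟩
  rw [sigMu, if_neg hsub, dif_pos hex]
  exact sigDeltaBar_image_subset_sigMuFrom_subset hp ha hex.choose_spec

/-- For every tame signature `(a_0,…,a_{f−1})` and every subset `J ⊆ ℤ/fℤ`, one has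
`δ(J) ⊆ μ(J) ⊆ δ(J) ∪ J`, where `δ(J)` is the image of `J` under the induced map
`δ : ℤ/fℤ → ℤ/fℤ`. -/
theorem sigDelta_subset_sigMu_subset (p f : ℕ) (a : ℤ → ℕ) (hp : p.Prime)
    (hsig : IsTameSignature p f a) (J : Set (ZMod f)) :
    sigDeltaBar p f a '' J ⊆ sigMu p f a J ∧
      sigMu p f a J ⊆ (sigDeltaBar p f a '' J) ∪ J :=
  sigDelta_subset_sigMu_subset_general p f a hsig J
end
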